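/- Let ℓ ≥ 1 and for each i = 1, …, ℓ let U^(i), V^(i) be GF(q)-subspaces of GF(q)^(N_i). Suppose for each i there exist subspaces W^(i) ⊆ (U^(i))^⊥ and E^(i) ⊆ GF(q)^(N_i) with W^(i) ∩ E^(i) = 0, E^(i) ∩ (U^(i))^⊥ = 0 and V^(i) = W^(i) + E^(i), and set δ := Σ_i (dim (U^(i))^⊥ − dim W^(i)) and γ := Σ_i dim E^(i). Then for each i there exist subspaces W'^(i) ⊆ U^(i) and E'^(i) ⊆ GF(q)^(N_i) with W'^(i) ∩ E'^(i) = 0, E'^(i) ∩ U^(i) = 0 and (V^(i))^⊥ = W'^(i) + E'^(i), such that Σ_i (dim U^(i) − dim W'^(i)) = γ and Σ_i dim E'^(i) = δ. -/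

import Mathlib

/-!
The argument works coordinatewise for any nondegenerate reflexive bilinear form. Take
`W' = U ∩ V^⊥`. Since `U ⊆ W^⊥`, this is `U ∩ E^⊥`, and `E ∩ U^⊥ = 0` dualises to
`U + E^⊥ = ⊤`, so `dim U - dim W' = dim E`. Any complement `E'` of `W'` inside `V^⊥` meets `U`
trivially (as `U ∩ V^⊥ = W'`), and `dim E' = dim V^⊥ - dim W' = dim U^⊥ - dim W` because
`dim V = dim W + dim E`.
-/

namespace Stmt18

/-- Orthogonal complement of a subspace of `GF(q)^N` w.r.t. the standard dot product. -/
def perp {K : Type} [Field K] {N : ℕ} (U : Submodule K (Fin N → K)) :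
    Submodule K (Fin N → K) where
  carrier := {x | ∀ u ∈ U, ∑ j, x j * u j = 0}
  add_mem' := by
    intro x y hx hy u hu
    simp only [Set.mem_setOf_eq] at hx hy ⊢
    have h1 := hx u hu
    have h2 := hy u hu
    simp [Pi.add_apply, add_mul, Finset.sum_add_distrib, h1, h2]
  zero_mem' := by
    intro u _
    simp
  smul_mem' := by
    intro c x hx u hu
    simp only [Set.mem_setOf_eq] at hx ⊢
    have h := hx u hu
    calc ∑ j, (c • x) j * u j = c * ∑ j, x j * u j := by
          simp [Finset.mul_sum, mul_assoc]
      _ = 0 := by rw [h, mul_zero]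

end Stmt18

theorem exists_inf_eq_bot_and_sup_eq_of_le {α : Type*} [Lattice α] [BoundedOrder α]
    [IsModularLattice α] [ComplementedLattice α] {a p : α} (hap : a ≤ p) :
    ∃ b, a ⊓ b = ⊥ ∧ a ⊔ b = p := by
  obtain ⟨c, hc⟩ := exists_isCompl a
  refine ⟨c ⊓ p, ?_, ?_⟩
  · rw [← inf_assoc, hc.inf_eq_bot, bot_inf_eq]
  · rw [← sup_inf_assoc_of_le c hap, hc.sup_eq_top, top_inf_eq]

namespace LinearMap.BilinForm

open Module

section
variable {R M : Type*} [CommRing R] [AddCommGroup M] [Module R M] {B : LinearMap.BilinForm R M}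

theorem orthogonal_sup (N L : Submodule R M) :
    B.orthogonal (N ⊔ L) = B.orthogonal N ⊓ B.orthogonal L := by
  refine le_antisymm (le_inf (orthogonal_le le_sup_left) (orthogonal_le le_sup_right)) ?_
  rintro x ⟨hN, hL⟩ y hy
  obtain ⟨n, hn, l, hl, rfl⟩ := Submodule.mem_sup.mp hy
  rw [map_add, LinearMap.add_apply, hN n hn, hL l hl, add_zero]

theorem IsRefl.le_orthogonal_comm (hB₀ : B.IsRefl) {N L : Submodule R M} :
    N ≤ B.orthogonal L ↔ L ≤ B.orthogonal N :=
  ⟨fun h l hl _ hn => hB₀ _ _ (h hn l hl), fun h n hn _ hl => hB₀ _ _ (h hl n hn)⟩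

end

variable {K V : Type*} [Field K] [AddCommGroup V] [Module K V] [FiniteDimensional K V]
  {B : LinearMap.BilinForm K V}

theorem sup_orthogonal_eq_top_of_inf_orthogonal_eq_bot (hB : B.Nondegenerate) (hB₀ : B.IsRefl)
    {U E : Submodule K V} (hEU : E ⊓ B.orthogonal U = ⊥) : U ⊔ B.orthogonal E = ⊤ := by
  rw [← orthogonal_orthogonal hB hB₀ (U ⊔ _), orthogonal_sup, orthogonal_orthogonal hB hB₀,
    inf_comm, hEU, orthogonal_bot]

theorem finrank_inf_orthogonal_add_finrank (hB : B.Nondegenerate) (hB₀ : B.IsRefl)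
    {U E : Submodule K V} (hEU : E ⊓ B.orthogonal U = ⊥) :
    finrank K ↥(U ⊓ B.orthogonal E) + finrank K E = finrank K U := by
  have hsum := Submodule.finrank_sup_add_finrank_inf_eq U (B.orthogonal E)
  rw [sup_orthogonal_eq_top_of_inf_orthogonal_eq_bot hB hB₀ hEU, finrank_top,
    finrank_orthogonal hB] at hsum
  have := Submodule.finrank_le E
  omega

theorem exists_orthogonal_sup_eq (hB : B.Nondegenerate) (hB₀ : B.IsRefl)
    {U W E : Submodule K V} (hWU : W ≤ B.orthogonal U) (hWE : W ⊓ E = ⊥)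
    (hEU : E ⊓ B.orthogonal U = ⊥) :
    ∃ W' E' : Submodule K V, W' ≤ U ∧ W' ⊓ E' = ⊥ ∧ E' ⊓ U = ⊥ ∧
      B.orthogonal (W ⊔ E) = W' ⊔ E' ∧
      finrank K W' + finrank K E = finrank K U ∧
      finrank K E' + finrank K W = finrank K (B.orthogonal U) := by
  set W' := U ⊓ B.orthogonal (W ⊔ E) with hW'_def
  obtain ⟨E', hW'E', hsup⟩ := exists_inf_eq_bot_and_sup_eq_of_le (inf_le_right : W' ≤ _)
  have hW' : W' = U ⊓ B.orthogonal E := by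
    rw [hW'_def, orthogonal_sup, ← inf_assoc, inf_eq_left.mpr (hB₀.le_orthogonal_comm.mp hWU)]
  have hE'U : E' ⊓ U = ⊥ := by
    refine eq_bot_iff.mpr fun x hx => hW'E' ▸ ⟨⟨hx.2, ?_⟩, hx.1⟩
    exact hsup ▸ Submodule.mem_sup_right hx.1
  have hdimW' : finrank K W' + finrank K E = finrank K U :=
    hW' ▸ finrank_inf_orthogonal_add_finrank hB hB₀ hEU
  have hdimV := Submodule.finrank_sup_add_finrank_inf_eq W E
  have hdimV' := Submodule.finrank_sup_add_finrank_inf_eq W' E'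
  rw [hWE, finrank_bot] at hdimV
  rw [hW'E', finrank_bot, hsup, finrank_orthogonal hB] at hdimV'
  have := Submodule.finrank_le (W ⊔ E)
  have := Submodule.finrank_le U
  refine ⟨W', E', inf_le_left, hW'E', hE'U, hsup.symm, hdimW', ?_⟩
  rw [finrank_orthogonal hB]
  omega

end LinearMap.BilinForm

section DotProduct

variable {R m : Type*} [CommRing R] [Fintype m]

theorem dotProductBilin_isRefl :
    LinearMap.BilinForm.IsRefl (dotProductBilin R R : LinearMap.BilinForm R (m → R)) :=
  fun x y h => by rwa [dotProductBilin_apply_apply, dotProduct_comm] at h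

theorem dotProductBilin_nondegenerate :
    LinearMap.BilinForm.Nondegenerate (dotProductBilin R R : LinearMap.BilinForm R (m → R)) := by
  classical
  refine (LinearMap.IsRefl.nondegenerate_iff_separatingLeft
    (dotProductBilin_isRefl (R := R) (m := m))).mpr fun x hx => funext fun i => ?_
  simpa [dotProduct_single] using hx (Pi.single i 1)

end DotProduct

namespace Stmt18

theorem perp_eq_orthogonal {K : Type} [Field K] {N : ℕ} (U : Submodule K (Fin N → K)) :
    perp U = LinearMap.BilinForm.orthogonal (dotProductBilin K K) U :=
  Submodule.ext fun _ => forall₂_congr fun u _ => by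
    rw [dotProductBilin_apply_apply, dotProduct_comm, dotProduct]


theorem dual_reachability
    {K : Type} [Field K]
    {ℓ : ℕ} (N : Fin ℓ → ℕ)
    (U V W E : (i : Fin ℓ) → Submodule K (Fin (N i) → K))
    (hWU : ∀ i, W i ≤ perp (U i))
    (hWE : ∀ i, W i ⊓ E i = ⊥)
    (hEU : ∀ i, E i ⊓ perp (U i) = ⊥)
    (hV : ∀ i, V i = W i ⊔ E i)
    (γ δ : ℕ)
    (hδ : δ = ∑ i, (Module.finrank K ↥(perp (U i)) - Module.finrank K ↥(W i)))
    (hγ : γ = ∑ i, Module.finrank K ↥(E i)) :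
    ∃ W' E' : (i : Fin ℓ) → Submodule K (Fin (N i) → K),
      (∀ i, W' i ≤ U i) ∧
      (∀ i, W' i ⊓ E' i = ⊥) ∧
      (∀ i, E' i ⊓ U i = ⊥) ∧
      (∀ i, perp (V i) = W' i ⊔ E' i) ∧
      (∑ i, (Module.finrank K ↥(U i) - Module.finrank K ↥(W' i))) = γ ∧
      (∑ i, Module.finrank K ↥(E' i)) = δ := by
  simp only [perp_eq_orthogonal, hV] at hWU hEU ⊢
  choose W' E' hW'U hW'E' hE'U hsup hdimU hdimUperp using fun i =>
    LinearMap.BilinForm.exists_orthogonal_sup_eq dotProductBilin_nondegenerate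
      dotProductBilin_isRefl (hWU i) (hWE i) (hEU i)
  refine ⟨W', E', hW'U, hW'E', hE'U, hsup, ?_, ?_⟩
  · exact hγ ▸ Finset.sum_congr rfl fun i _ => by have := hdimU i; omega
  · exact hδ ▸ Finset.sum_congr rfl fun i _ => by
      rw [perp_eq_orthogonal]
      have := hdimUperp i
      omega

end Stmt18
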